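/- Let H be an induced subgraph of a graph G. Then reg I(H) ≤ reg I(G), where I(H) and I(G) are the edge ideals considered over the polynomial rings on their respective vertex sets. -/

import Mathlib

open MvPolynomial

noncomputable section

namespace CMReg

variable {k : Type*} [Field k] {σ : Type*} [Fintype σ] [DecidableEq σ] [LinearOrder σ]

/-- The degree-`d` homogeneous component of an ideal `I` of `k[x_s : s ∈ σ]`, as a
`k`-vector space (`⊥` for negative `d`). -/
def degComp (I : Ideal (MvPolynomial σ k)) (d : ℤ) : Submodule k (MvPolynomial σ k) :=
  if 0 ≤ d then I.restrictScalars k ⊓ homogeneousSubmodule σ k d.toNat else ⊥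

lemma mulX_mem (I : Ideal (MvPolynomial σ k)) (a : σ) (d : ℤ) (m : MvPolynomial σ k)
    (hm : m ∈ degComp I d) : X a * m ∈ degComp I (d + 1) := by
  unfold degComp at *
  split_ifs at hm with h
  · rw [if_pos (by omega)]
    rw [Submodule.mem_inf] at hm
    obtain ⟨h1, h2⟩ := hm
    rw [Submodule.mem_inf]
    refine ⟨I.mul_mem_left _ h1, ?_⟩
    rw [mem_homogeneousSubmodule] at h2 ⊢
    have e : (d + 1).toNat = 1 + d.toNat := by omega
    rw [e]
    exact (isHomogeneous_X k a).mul h2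
  · simp only [Submodule.mem_bot] at hm
    subst hm
    rw [mul_zero]
    exact zero_mem _

/-- The internal-degree-`j` strand of the Koszul complex `K(x₁,...,xₙ) ⊗ I` in homological
degree `i`: a direct sum of copies of the degree-`(j - i)` component of `I`, indexed by the
`i`-element subsets of the variables (the basis of `Λⁱ`). -/
abbrev KD (I : Ideal (MvPolynomial σ k)) (i j : ℕ) : Type _ :=
  {S : Finset σ // S.card = i} → degComp I ((j : ℤ) - i)

/-- The Koszul differential `K_{i+1} → K_i` in internal degree `j`:
`(d f)(S) = ∑_{a ∉ S} (-1)^{|{b ∈ S : b < a}|} xₐ · f(S ∪ {a})`. -/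
def kdiff (I : Ideal (MvPolynomial σ k)) (i j : ℕ) : KD I (i + 1) j →ₗ[k] KD I i j where
  toFun f S := ∑ a ∈ S.1ᶜ.attach,
    ((-1 : k) ^ (S.1.filter (fun b => b < a.1)).card) •
      (⟨X a.1 * (f ⟨insert a.1 S.1, by
          rw [Finset.card_insert_of_notMem (Finset.mem_compl.mp a.2), S.2]⟩ : _).1, by
        have h := mulX_mem I a.1 _ _ (f ⟨insert a.1 S.1, by
          rw [Finset.card_insert_of_notMem (Finset.mem_compl.mp a.2), S.2]⟩).2
        rwa [show ((j : ℤ) - (i + 1 : ℕ)) + 1 = (j : ℤ) - i by push_cast; ring] at h⟩ :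
        degComp I ((j : ℤ) - i))
  map_add' f g := by
    funext S
    rw [Pi.add_apply, ← Finset.sum_add_distrib]
    refine Finset.sum_congr rfl (fun a _ => ?_)
    rw [← smul_add]
    congr 1
    apply Subtype.ext
    simp [mul_add]
  map_smul' c f := by
    funext S
    rw [RingHom.id_apply, Pi.smul_apply, Finset.smul_sum]
    refine Finset.sum_congr rfl (fun a _ => ?_)
    rw [smul_comm]
    congr 1
    apply Subtype.ext
    simp [mul_smul_comm]

/-- The cycles of the degree-`j` strand of the Koszul complex at homological degree `i`. -/
def cyclesAt (I : Ideal (MvPolynomial σ k)) (i j : ℕ) : Submodule k (KD I i j) :=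
  match i with
  | 0 => ⊤
  | (i' + 1) => LinearMap.ker (kdiff I i' j)

/-- The graded Betti number `β_{ij}(I) = dim_k Tor_i(k, I)_j`, computed as the dimension of
the homology of the degree-`j` strand of `K(x) ⊗ I` at homological degree `i`. -/
def bettiNum (I : Ideal (MvPolynomial σ k)) (i j : ℕ) : ℕ :=
  Module.finrank k (cyclesAt I i j) - Module.finrank k (LinearMap.range (kdiff I i j))

/-- The Castelnuovo–Mumford regularity `reg I = sup { j - i : β_{ij}(I) ≠ 0 }` of an ideal
of the polynomial ring, as an element of `ℕ∞`. -/
def reg (I : Ideal (MvPolynomial σ k)) : ℕ∞ :=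
  sSup {d : ℕ∞ | ∃ i j : ℕ, bettiNum I i j ≠ 0 ∧ ((j - i : ℕ) : ℕ∞) = d}

end CMReg

/-- `M` is an induced matching of `G`: a set of pairwise vertex-disjoint edges of `G` such
that the only edges of `G` between vertices covered by `M` are the edges of `M` themselves. -/
def SimpleGraph.IsInducedMatching {V : Type*} (G : SimpleGraph V) (M : Finset (Sym2 V)) : Prop :=
  (↑M : Set (Sym2 V)) ⊆ G.edgeSet ∧
  (∀ e ∈ M, ∀ f ∈ M, e ≠ f → ∀ u : V, u ∈ e → u ∉ f) ∧
  (∀ u v : V, (∃ e ∈ M, u ∈ e) → (∃ f ∈ M, v ∈ f) → G.Adj u v → s(u, v) ∈ M)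

/-- The induced matching number of `G`: the largest size of an induced matching. -/
noncomputable def SimpleGraph.inducedMatchingNumber {V : Type*} (G : SimpleGraph V) : ℕ :=
  sSup {n : ℕ | ∃ M : Finset (Sym2 V), G.IsInducedMatching M ∧ M.card = n}

/-- The edge ideal of a graph `G`: the ideal of `k[x_v : v ∈ V]` generated by the products
`x_u x_v` over the edges `{u, v}` of `G`. -/
def edgeIdeal (k : Type*) [Field k] {V : Type*} (G : SimpleGraph V) :
    Ideal (MvPolynomial V k) :=
  Ideal.span {p | ∃ u v : V, G.Adj u v ∧ p = MvPolynomial.X u * MvPolynomial.X v}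

/-!
The degree-`j` Koszul strand of `I(G[s])` is a retract of that of `I(G)`. Extending a chain along
`s ↪ V` (renaming variables, with coefficients zero at subsets not contained in `s`) and
restricting one (killing the variables outside `s`, keeping the coefficients at subsets of `s`)
both commute with the Koszul differentials, the latter because `x_v` dies for `v ∉ s`, and
restriction after extension is the identity. Hence every cycle of `I(G[s])` is a boundary as soon
as every cycle of `I(G)` is one, so `β_{ij}(I(G[s])) ≠ 0` forces `β_{ij}(I(G)) ≠ 0`, and the
supremum defining the regularity can only grow.
-/

namespace Finset

variable {α β : Type*}

lemma sum_sum_erase_eq_zero_of_antisymm {M : Type*} [DecidableEq α] [AddCommGroup M]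
    (s : Finset α) (c : α → α → M) (hc : ∀ a ∈ s, ∀ b ∈ s, a ≠ b → c b a = -c a b) :
    ∑ a ∈ s, ∑ b ∈ s.erase a, c a b = 0 := by
  rw [sum_sigma']
  refine sum_involution (fun p _ => ⟨p.2, p.1⟩) ?_ ?_ ?_ (fun _ _ => rfl)
  · rintro ⟨a, b⟩ hp
    simp only [mem_sigma, mem_erase] at hp
    rw [hc a hp.1 b hp.2.2 hp.2.1.symm, add_neg_cancel]
  · rintro ⟨a, b⟩ hp - h
    simp only [mem_sigma, mem_erase] at hp
    exact hp.2.1 (congrArg Sigma.fst h)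
  · rintro ⟨a, b⟩ hp
    simp only [mem_sigma, mem_erase] at hp ⊢
    exact ⟨hp.2.2, hp.2.1.symm, hp.1⟩

lemma sum_compl_map_of_eq_zero {M : Type*} [AddCommMonoid M] [Fintype α] [Fintype β]
    [DecidableEq α] [DecidableEq β] (e : α ↪ β) (T : Finset α) {F : β → M}
    (hF : ∀ b ∉ Set.range e, F b = 0) :
    ∑ b ∈ (T.map e)ᶜ, F b = ∑ a ∈ Tᶜ, F (e a) := by
  rw [← sum_map Tᶜ e F]
  refine (sum_subset (fun b hb => ?_) fun b hb hb' => hF b ?_).symm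
  · obtain ⟨a, ha, rfl⟩ := mem_map.mp hb
    rwa [mem_compl, mem_map' e, ← mem_compl]
  · rintro ⟨a, rfl⟩
    rw [mem_compl, mem_map' e] at hb
    exact hb' (mem_map_of_mem e (mem_compl.mpr hb))

lemma card_filter_lt_insert [DecidableEq α] [LinearOrder α] {T : Finset α} {a : α} (ha : a ∉ T)
    (b : α) :
    #{c ∈ insert a T | c < b} = #{c ∈ T | c < b} + if a < b then 1 else 0 := by
  rw [filter_insert]
  split_ifs
  · exact card_insert_of_notMem fun h => ha (mem_filter.mp h).1
  · rfl

lemma card_filter_lt_map [Preorder α] [Preorder β] [DecidableLT α] [DecidableLT β]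
    (e : α ↪o β) (T : Finset α) (a : α) :
    #{b ∈ T.map e.toEmbedding | b < e a} = #{b ∈ T | b < a} := by
  rw [filter_map, card_map]
  simp only [Function.comp_def, RelEmbedding.coe_toEmbedding, e.lt_iff_lt]

end Finset

namespace MvPolynomial

variable {R σ τ : Type*} [CommSemiring R] {f : σ → τ} (hf : Function.Injective f)

lemma killCompl_X_apply (a : σ) : killCompl (R := R) hf (X (f a)) = X a := by
  rw [← rename_X, killCompl_rename_app]

lemma killCompl_X_of_notMem_range {b : τ} (hb : b ∉ Set.range f) :
    killCompl (R := R) hf (X b) = 0 := by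
  rw [killCompl, aeval_X, dif_neg hb]

lemma isHomogeneous_killCompl_X (b : τ) : (killCompl (R := R) hf (X b)).IsHomogeneous 1 := by
  by_cases hb : b ∈ Set.range f
  · obtain ⟨a, rfl⟩ := hb
    rw [killCompl_X_apply]
    exact isHomogeneous_X R a
  · rw [killCompl_X_of_notMem_range hf hb]
    exact isHomogeneous_zero _ _ 1

end MvPolynomial

namespace CMReg

open Finset

section Coefficients

variable {k : Type*} [Field k] {σ τ : Type*}

lemma map_mem_degComp {I : Ideal (MvPolynomial σ k)} {J : Ideal (MvPolynomial τ k)}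
    (φ : MvPolynomial σ k →ₐ[k] MvPolynomial τ k) (hX : ∀ v, (φ (X v)).IsHomogeneous 1)
    (hIJ : I.map φ ≤ J) {d : ℤ} {p : MvPolynomial σ k} (hp : p ∈ degComp I d) :
    φ p ∈ degComp J d := by
  unfold degComp at hp ⊢
  split_ifs at hp ⊢
  · obtain ⟨hpI, hpd⟩ := Submodule.mem_inf.mp hp
    refine Submodule.mem_inf.mpr ⟨hIJ (Ideal.mem_map_of_mem φ hpI), ?_⟩
    rw [mem_homogeneousSubmodule, AlgHom.congr_fun (aeval_unique φ) p]
    simpa using (hpd : p.IsHomogeneous _).aeval (⇑φ ∘ X) hX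
  · rw [(Submodule.mem_bot k).mp hp, map_zero]
    exact zero_mem _

def KD.coeff {I : Ideal (MvPolynomial σ k)} {m j : ℕ} (f : KD I m j) (T : Finset σ) :
    MvPolynomial σ k :=
  if h : #T = m then f ⟨T, h⟩ else 0

namespace KD

variable {I : Ideal (MvPolynomial σ k)} {m j : ℕ}

lemma coeff_of_card {T : Finset σ} (h : #T = m) (f : KD I m j) : coeff f T = f ⟨T, h⟩ :=
  dif_pos h

lemma coeff_of_card_ne {T : Finset σ} (h : #T ≠ m) (f : KD I m j) : coeff f T = 0 :=
  dif_neg h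

lemma coeff_mem (f : KD I m j) (T : Finset σ) : coeff f T ∈ degComp I ((j : ℤ) - m) := by
  unfold coeff
  split_ifs
  exacts [Subtype.mem _, zero_mem _]

@[simp]
lemma coeff_add (f g : KD I m j) (T : Finset σ) : coeff (f + g) T = coeff f T + coeff g T := by
  unfold coeff
  split_ifs <;> simp

@[simp]
lemma coeff_smul (c : k) (f : KD I m j) (T : Finset σ) : coeff (c • f) T = c • coeff f T := by
  unfold coeff
  split_ifs <;> simp

@[simp]
lemma coeff_zero (T : Finset σ) : coeff (0 : KD I m j) T = 0 := by
  unfold coeff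
  split_ifs <;> simp

lemma ext {f g : KD I m j} (h : ∀ T, coeff f T = coeff g T) : f = g := by
  funext S
  apply Subtype.ext
  simpa only [coeff_of_card S.2, Subtype.coe_eta] using h S.1

end KD

def koszulMap {I : Ideal (MvPolynomial σ k)} {J : Ideal (MvPolynomial τ k)}
    (φ : MvPolynomial σ k →ₐ[k] MvPolynomial τ k) (hX : ∀ v, (φ (X v)).IsHomogeneous 1)
    (hIJ : I.map φ ≤ J) (F : Finset τ → Finset σ) (i j : ℕ) : KD I i j →ₗ[k] KD J i j where
  toFun f T := ⟨φ (KD.coeff f (F T.1)), map_mem_degComp φ hX hIJ (KD.coeff_mem f _)⟩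
  map_add' f g := by
    funext T
    ext1
    simp
  map_smul' c f := by
    funext T
    ext1
    simp

lemma coeff_koszulMap {I : Ideal (MvPolynomial σ k)} {J : Ideal (MvPolynomial τ k)}
    (φ : MvPolynomial σ k →ₐ[k] MvPolynomial τ k) (hX : ∀ v, (φ (X v)).IsHomogeneous 1)
    (hIJ : I.map φ ≤ J) (F : Finset τ → Finset σ) {i j : ℕ} (f : KD I i j) (T : Finset τ) :
    KD.coeff (koszulMap φ hX hIJ F i j f) T = if #T = i then φ (KD.coeff f (F T)) else 0 := by
  split_ifs with hT
  · rw [KD.coeff_of_card hT]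
    rfl
  · exact KD.coeff_of_card_ne hT _

end Coefficients

lemma koszul_sign_swap {R σ : Type*} [CommRing R] [DecidableEq σ] [LinearOrder σ] {T : Finset σ}
    {a b : σ} (ha : a ∉ T) (hb : b ∉ T) (hab : a ≠ b) :
    (-1 : R) ^ #{c ∈ T | c < b} * (-1 : R) ^ #{c ∈ insert b T | c < a} =
      -((-1 : R) ^ #{c ∈ T | c < a} * (-1 : R) ^ #{c ∈ insert a T | c < b}) := by
  rw [card_filter_lt_insert ha, card_filter_lt_insert hb]
  rcases hab.lt_or_gt with h | h <;> simp [h, h.not_gt, pow_succ, mul_comm]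

section Complex

variable {k : Type*} [Field k] {σ : Type*} [Fintype σ] [DecidableEq σ] [LinearOrder σ]

instance (I : Ideal (MvPolynomial σ k)) (d : ℤ) : FiniteDimensional k (degComp I d) := by
  refine Submodule.finiteDimensional_of_le (S₂ := restrictTotalDegree σ k d.toNat) ?_
  unfold degComp
  split_ifs
  · intro p hp
    rw [mem_restrictTotalDegree]
    rcases eq_or_ne p 0 with rfl | hp0
    · simp
    · exact ((Submodule.mem_inf.mp hp).2 : p.IsHomogeneous _).totalDegree hp0 |>.le
  · exact bot_le

lemma coeff_kdiff {I : Ideal (MvPolynomial σ k)} {i j : ℕ} (f : KD I (i + 1) j) (T : Finset σ) :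
    KD.coeff (kdiff I i j f) T =
      ∑ a ∈ Tᶜ, (-1 : k) ^ #{b ∈ T | b < a} • (X a * KD.coeff f (insert a T)) := by
  by_cases hT : #T = i
  · rw [KD.coeff_of_card hT]
    simp only [kdiff, LinearMap.coe_mk, AddHom.coe_mk, Submodule.coe_sum, Submodule.coe_smul]
    rw [← sum_attach Tᶜ]
    refine sum_congr rfl fun a _ => ?_
    rw [KD.coeff_of_card (by rw [card_insert_of_notMem (mem_compl.mp a.2), hT])]
  · rw [KD.coeff_of_card_ne hT]
    refine (sum_eq_zero fun a ha => ?_).symm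
    rw [KD.coeff_of_card_ne (by rw [card_insert_of_notMem (mem_compl.mp ha)]; omega),
      mul_zero, smul_zero]

theorem kdiff_kdiff (I : Ideal (MvPolynomial σ k)) (i j : ℕ) (f : KD I (i + 1 + 1) j) :
    kdiff I i j (kdiff I (i + 1) j f) = 0 := by
  refine KD.ext fun T => ?_
  simp only [coeff_kdiff, compl_insert, KD.coeff_zero, mul_sum, smul_sum, mul_smul_comm,
    smul_smul]
  refine sum_sum_erase_eq_zero_of_antisymm _ _ fun a ha b hb hab => ?_
  rw [mem_compl] at ha hb
  rw [koszul_sign_swap ha hb hab, insert_comm, mul_left_comm, neg_smul]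

lemma cyclesAt_succ (I : Ideal (MvPolynomial σ k)) (i j : ℕ) :
    cyclesAt I (i + 1) j = LinearMap.ker (kdiff I i j) :=
  rfl

lemma range_kdiff_le_cyclesAt (I : Ideal (MvPolynomial σ k)) (i j : ℕ) :
    LinearMap.range (kdiff I i j) ≤ cyclesAt I i j := by
  cases i with
  | zero => exact le_top
  | succ i =>
    rintro _ ⟨f, rfl⟩
    exact kdiff_kdiff I i j f

theorem bettiNum_eq_zero_iff (I : Ideal (MvPolynomial σ k)) (i j : ℕ) :
    bettiNum I i j = 0 ↔ cyclesAt I i j ≤ LinearMap.range (kdiff I i j) := by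
  rw [bettiNum, Nat.sub_eq_zero_iff_le]
  refine ⟨fun h => ?_, Submodule.finrank_mono⟩
  exact (Submodule.eq_of_le_of_finrank_le (range_kdiff_le_cyclesAt I i j) h).ge

end Complex

lemma le_range_of_retract {R A₀ A₁ B₀ B₁ : Type*} [Ring R] [AddCommGroup A₀] [AddCommGroup A₁]
    [AddCommGroup B₀] [AddCommGroup B₁] [Module R A₀] [Module R A₁] [Module R B₀] [Module R B₁]
    {dA : A₁ →ₗ[R] A₀} {dB : B₁ →ₗ[R] B₀} {φ : A₀ →ₗ[R] B₀} {ψ₀ : B₀ →ₗ[R] A₀}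
    {ψ₁ : B₁ →ₗ[R] A₁} (hψ : dA ∘ₗ ψ₁ = ψ₀ ∘ₗ dB) (hψφ : ψ₀ ∘ₗ φ = LinearMap.id)
    {ZA : Submodule R A₀} {ZB : Submodule R B₀} (hφ : ZA.map φ ≤ ZB)
    (hZB : ZB ≤ LinearMap.range dB) : ZA ≤ LinearMap.range dA := by
  intro z hz
  obtain ⟨y, hy⟩ := hZB (hφ (Submodule.mem_map_of_mem hz))
  refine ⟨ψ₁ y, ?_⟩
  rw [← LinearMap.comp_apply, hψ, LinearMap.comp_apply, hy, ← LinearMap.comp_apply, hψφ,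
    LinearMap.id_apply]

section Retract

variable {k : Type*} [Field k] {σ τ : Type*} [Fintype σ] [DecidableEq σ] [LinearOrder σ]
  [Fintype τ] [DecidableEq τ] [LinearOrder τ] {I : Ideal (MvPolynomial σ k)}
  {J : Ideal (MvPolynomial τ k)} {j : ℕ}

lemma map_cyclesAt_le (φ : ∀ i, KD J i j →ₗ[k] KD I i j)
    (hφ : ∀ i, kdiff I i j ∘ₗ φ (i + 1) = φ i ∘ₗ kdiff J i j) (i : ℕ) :
    (cyclesAt J i j).map (φ i) ≤ cyclesAt I i j := by
  cases i with
  | zero => exact le_top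
  | succ i =>
    rw [Submodule.map_le_iff_le_comap]
    intro z hz
    rw [cyclesAt_succ, LinearMap.mem_ker] at hz
    rw [Submodule.mem_comap, cyclesAt_succ, LinearMap.mem_ker, ← LinearMap.comp_apply, hφ,
      LinearMap.comp_apply, hz, map_zero]

theorem bettiNum_ne_zero_of_retract (φ : ∀ i, KD J i j →ₗ[k] KD I i j)
    (ψ : ∀ i, KD I i j →ₗ[k] KD J i j)
    (hφ : ∀ i, kdiff I i j ∘ₗ φ (i + 1) = φ i ∘ₗ kdiff J i j)
    (hψ : ∀ i, kdiff J i j ∘ₗ ψ (i + 1) = ψ i ∘ₗ kdiff I i j)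
    (hψφ : ∀ i, ψ i ∘ₗ φ i = LinearMap.id) {i : ℕ} (h : bettiNum J i j ≠ 0) :
    bettiNum I i j ≠ 0 := by
  rw [Ne, bettiNum_eq_zero_iff] at h ⊢
  exact fun hI => h (le_range_of_retract (hψ i) (hψφ i) (map_cyclesAt_le φ hφ i) hI)

end Retract

theorem reg_le_of_bettiNum_ne_zero {k : Type*} [Field k] {σ τ : Type*} [Fintype σ]
    [DecidableEq σ] [LinearOrder σ] [Fintype τ] [DecidableEq τ] [LinearOrder τ]
    {I : Ideal (MvPolynomial σ k)} {J : Ideal (MvPolynomial τ k)}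
    (h : ∀ i j, bettiNum J i j ≠ 0 → bettiNum I i j ≠ 0) : reg J ≤ reg I := by
  refine sSup_le_sSup ?_
  rintro _ ⟨i, j, hij, rfl⟩
  exact ⟨i, j, h i j hij, rfl⟩

section Embedding

variable {k : Type*} [Field k] {σ τ : Type*} [LinearOrder σ] [LinearOrder τ]
  {I : Ideal (MvPolynomial σ k)} {J : Ideal (MvPolynomial τ k)} (e : τ ↪o σ)

def koszulRestrict (hIJ : I.map (killCompl (R := k) e.injective) ≤ J) (i j : ℕ) :
    KD I i j →ₗ[k] KD J i j :=
  koszulMap (killCompl e.injective) (isHomogeneous_killCompl_X e.injective) hIJ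
    (map e.toEmbedding) i j

/-- Coefficients at finsets not of the form `T.map e` vanish: their preimage is too small. -/
def koszulExtend (hJI : J.map (rename (R := k) e) ≤ I) (i j : ℕ) : KD J i j →ₗ[k] KD I i j :=
  koszulMap (rename e) (fun v => by simpa using isHomogeneous_X k (e v)) hJI
    (fun S => S.preimage e e.injective.injOn) i j

lemma coeff_koszulRestrict (hIJ : I.map (killCompl (R := k) e.injective) ≤ J) {i j : ℕ}
    (g : KD I i j) (T : Finset τ) :
    KD.coeff (koszulRestrict e hIJ i j g) T =
      killCompl e.injective (KD.coeff g (T.map e.toEmbedding)) := by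
  rw [koszulRestrict, coeff_koszulMap]
  split_ifs with hT
  · rfl
  · rw [KD.coeff_of_card_ne (by rwa [card_map]), map_zero]

lemma coeff_koszulExtend_map (hJI : J.map (rename (R := k) e) ≤ I) {i j : ℕ} (f : KD J i j)
    (T : Finset τ) :
    KD.coeff (koszulExtend e hJI i j f) (T.map e.toEmbedding) = rename e (KD.coeff f T) := by
  rw [koszulExtend, coeff_koszulMap, card_map]
  split_ifs with hT
  · exact congrArg _ (congrArg _ (preimage_map e.toEmbedding T))
  · rw [KD.coeff_of_card_ne hT, map_zero]

lemma coeff_koszulExtend_of_forall_map_ne (hJI : J.map (rename (R := k) e) ≤ I) {i j : ℕ}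
    (f : KD J i j) {S : Finset σ} (hS : ∀ T : Finset τ, T.map e.toEmbedding ≠ S) :
    KD.coeff (koszulExtend e hJI i j f) S = 0 := by
  rw [koszulExtend, coeff_koszulMap]
  split_ifs with hSi
  · have hlt : #(S.preimage e e.injective.injOn) < #S := by
      rw [← card_map e.toEmbedding]
      exact card_lt_card ((map_subset_iff_subset_preimage.mpr subset_rfl).ssubset_of_ne (hS _))
    rw [KD.coeff_of_card_ne (by omega), map_zero]
  · rfl

lemma koszulRestrict_comp_koszulExtend (hIJ : I.map (killCompl (R := k) e.injective) ≤ J)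
    (hJI : J.map (rename (R := k) e) ≤ I) (i j : ℕ) :
    koszulRestrict e hIJ i j ∘ₗ koszulExtend e hJI i j = LinearMap.id :=
  LinearMap.ext fun f => KD.ext fun T => by
    rw [LinearMap.comp_apply, coeff_koszulRestrict, coeff_koszulExtend_map, killCompl_rename_app,
      LinearMap.id_apply]

variable [Fintype σ] [DecidableEq σ] [Fintype τ] [DecidableEq τ]

lemma kdiff_comp_koszulRestrict (hIJ : I.map (killCompl (R := k) e.injective) ≤ J) (i j : ℕ) :
    kdiff J i j ∘ₗ koszulRestrict e hIJ (i + 1) j = koszulRestrict e hIJ i j ∘ₗ kdiff I i j := by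
  refine LinearMap.ext fun g => KD.ext fun T => ?_
  rw [LinearMap.comp_apply, LinearMap.comp_apply, coeff_kdiff, coeff_koszulRestrict,
    coeff_kdiff, map_sum, sum_compl_map_of_eq_zero]
  · refine sum_congr rfl fun a _ => ?_
    rw [coeff_koszulRestrict, map_smul, map_mul, RelEmbedding.coe_toEmbedding,
      killCompl_X_apply, card_filter_lt_map, map_insert, RelEmbedding.coe_toEmbedding]
  · intro b hb
    rw [map_smul, map_mul, killCompl_X_of_notMem_range _ hb, zero_mul, smul_zero]

lemma kdiff_comp_koszulExtend (hJI : J.map (rename (R := k) e) ≤ I) (i j : ℕ) :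
    kdiff I i j ∘ₗ koszulExtend e hJI (i + 1) j = koszulExtend e hJI i j ∘ₗ kdiff J i j := by
  refine LinearMap.ext fun f => KD.ext fun S => ?_
  rw [LinearMap.comp_apply, LinearMap.comp_apply]
  by_cases hS : ∃ T : Finset τ, T.map e.toEmbedding = S
  · obtain ⟨T, rfl⟩ := hS
    rw [coeff_kdiff, coeff_koszulExtend_map, coeff_kdiff, map_sum, sum_compl_map_of_eq_zero]
    · refine sum_congr rfl fun a _ => ?_
      rw [RelEmbedding.coe_toEmbedding, card_filter_lt_map, ← RelEmbedding.coe_toEmbedding,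
        ← map_insert, coeff_koszulExtend_map, map_smul, map_mul, rename_X,
        RelEmbedding.coe_toEmbedding]
    · intro b hb
      have hne : ∀ T' : Finset τ, T'.map e.toEmbedding ≠ insert b (T.map e.toEmbedding) := by
        intro T' hT'
        obtain ⟨a, -, rfl⟩ := mem_map.mp (hT' ▸ mem_insert_self b _)
        exact hb ⟨a, rfl⟩
      rw [coeff_koszulExtend_of_forall_map_ne e hJI _ hne, mul_zero, smul_zero]
  · simp only [not_exists] at hS
    rw [coeff_koszulExtend_of_forall_map_ne e hJI _ hS, coeff_kdiff]
    refine sum_eq_zero fun a _ => ?_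
    rw [coeff_koszulExtend_of_forall_map_ne e hJI _ fun T hT => ?_, mul_zero, smul_zero]
    obtain ⟨u, -, hu⟩ := subset_map_iff.mp (hT ▸ subset_insert a S)
    exact hS u hu.symm

theorem reg_le_of_map_rename_le (hJI : J.map (rename (R := k) e) ≤ I)
    (hIJ : I.map (killCompl (R := k) e.injective) ≤ J) : reg J ≤ reg I :=
  reg_le_of_bettiNum_ne_zero fun _ j =>
    bettiNum_ne_zero_of_retract (koszulExtend e hJI · j) (koszulRestrict e hIJ · j)
      (kdiff_comp_koszulExtend e hJI · j) (kdiff_comp_koszulRestrict e hIJ · j)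
      (koszulRestrict_comp_koszulExtend e hIJ hJI · j)

end Embedding

end CMReg

section EdgeIdeal

variable {k : Type*} [Field k] {V W : Type*} (G : SimpleGraph V)

lemma map_rename_edgeIdeal_comap_le (f : W → V) :
    (edgeIdeal k (G.comap f)).map (rename f) ≤ edgeIdeal k G := by
  rw [edgeIdeal, Ideal.map_span, Ideal.span_le]
  rintro _ ⟨_, ⟨u, v, huv, rfl⟩, rfl⟩
  exact Ideal.subset_span ⟨f u, f v, huv, by simp⟩

lemma map_killCompl_edgeIdeal_le {f : W → V} (hf : Function.Injective f) :
    (edgeIdeal k G).map (killCompl hf) ≤ edgeIdeal k (G.comap f) := by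
  rw [edgeIdeal, Ideal.map_span, Ideal.span_le]
  rintro _ ⟨_, ⟨u, v, huv, rfl⟩, rfl⟩
  rw [map_mul]
  by_cases hu : u ∈ Set.range f
  · by_cases hv : v ∈ Set.range f
    · obtain ⟨u, rfl⟩ := hu
      obtain ⟨v, rfl⟩ := hv
      rw [killCompl_X_apply, killCompl_X_apply]
      exact Ideal.subset_span ⟨u, v, huv, rfl⟩
    · rw [killCompl_X_of_notMem_range hf hv, mul_zero]
      exact zero_mem _
  · rw [killCompl_X_of_notMem_range hf hu, zero_mul]
    exact zero_mem _

end EdgeIdeal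

/-- For an induced subgraph `H = G[s]` of `G`, `reg I(H) ≤ reg I(G)`,
the two edge ideals being taken in the polynomial rings on the respective vertex sets. -/
theorem reg_edgeIdeal_induce_le {k : Type*} [Field k] {V : Type*}
    [Fintype V] [DecidableEq V] [LinearOrder V] (G : SimpleGraph V) (s : Finset V) :
    CMReg.reg (edgeIdeal k (G.induce (↑s : Set V))) ≤ CMReg.reg (edgeIdeal k G) :=
  CMReg.reg_le_of_map_rename_le (OrderEmbedding.subtype (· ∈ (s : Set V)))
    (map_rename_edgeIdeal_comap_le G _) (map_killCompl_edgeIdeal_le G Subtype.val_injective)
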